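/- arXiv:math/0609153 — 5 statements merged into one kernel-verified Lean document; each statement's English description precedes it below -/
import Mathlib

section
/- Let m, k, p be natural numbers, let L_a : ℝ → ℝ (a = 1, …, k) and C_α : ℝ → ℝ (α = 1, …, p) be smooth functions, let n¹, …, nᵏ ∈ ℝᵐ and η¹, …, ηᵖ ∈ ℝᵐ, and let c_α ∈ ℝ be constants. Then there exists a smooth function E₀ : ℝᵐ × ℝᵐ → ℝ such that for all q, v, w ∈ ℝᵐ: Σ_{j=1}^{m} [ Σ_{i=1}^{m} Σ_{a=1}^{k} n^a_j n^a_i L_a(⟨n^a, v⟩) w^i + Σ_{α=1}^{p} η^α_j C_α(⟨η^α, q⟩ + c_α) ] v^j = Σ_{j=1}^{m} (∂E₀/∂q^j)(q,v) v^j + Σ_{j=1}^{m} (∂E₀/∂v^j)(q,v) w^j. Consequently, if additionally R_Γ : ℝ → ℝ (Γ = 1, …, r) are smooth and N¹, …, Nʳ ∈ ℝᵐ, then the Birkhoffian components Q_j(q,v,w) = Σ_i Σ_a n^a_j n^a_i L_a(⟨n^a, v⟩) w^i + Σ_Γ N^Γ_j R_Γ(⟨N^Γ, v⟩) + Σ_α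 η^α_j C_α(⟨η^α, q⟩ + c_α) satisfy, for all q, v, w ∈ ℝᵐ: Σ_j Q_j(q,v,w) v^j = Σ_j (∂E₀/∂q^j)(q,v) v^j + Σ_j (∂E₀/∂v^j)(q,v) w^j + Σ_Γ R_Γ(⟨N^Γ, v⟩)·⟨N^Γ, v⟩. -/
/-! The energy is `E₀(q, v) = ∑ₐ Fₐ(⟨nᵃ, v⟩) + ∑_α G_α(⟨η^α, q⟩)` with primitives
`Fₐ'(x) = x Lₐ(x)` and `G_α'(x) = C_α(x + c_α)`. Its derivative at `(q, v)` in the direction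
`(v, w)` is `∑ₐ ⟨nᵃ, v⟩ Lₐ(⟨nᵃ, v⟩) ⟨nᵃ, w⟩ + ∑_α C_α(⟨η^α, q⟩ + c_α) ⟨η^α, v⟩`, which is the
inductor and capacitor part of `∑ⱼ Qⱼ vʲ` after exchanging the order of summation; the
resistor part of `∑ⱼ Qⱼ vʲ` is `∑_Γ R_Γ(⟨N^Γ, v⟩) ⟨N^Γ, v⟩` by the same exchange. -/

open Finset
open scoped Matrix ContDiff

theorem exists_contDiff_hasDerivAt {f : ℝ → ℝ} (hf : ContDiff ℝ ∞ f) :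
    ∃ F : ℝ → ℝ, ContDiff ℝ ∞ F ∧ ∀ x, HasDerivAt F (f x) x := by
  have hF (x : ℝ) : HasDerivAt (fun u => ∫ t in (0 : ℝ)..u, f t) (f x) x :=
    (hf.continuous.integral_hasStrictDerivAt 0 x).hasDerivAt
  refine ⟨_, contDiff_infty_iff_deriv.2 ⟨fun x => (hF x).differentiableAt, ?_⟩, hF⟩
  rwa [funext fun x => (hF x).deriv]

section SumCompCLM

variable {ι E : Type*} [Fintype ι] [NormedAddCommGroup E] [NormedSpace ℝ E]

theorem hasFDerivAt_sum_comp_clm {F f : ι → ℝ → ℝ} (hF : ∀ i t, HasDerivAt (F i) (f i t) t)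
    (ℓ : ι → E →L[ℝ] ℝ) (x : E) :
    HasFDerivAt (fun x => ∑ i, F i (ℓ i x)) (∑ i, f i (ℓ i x) • ℓ i) x :=
  HasFDerivAt.fun_sum fun i _ => (hF i (ℓ i x)).comp_hasFDerivAt x (ℓ i).hasFDerivAt

theorem contDiff_sum_comp_clm {F : ι → ℝ → ℝ} {n : WithTop ℕ∞} (hF : ∀ i, ContDiff ℝ n (F i))
    (ℓ : ι → E →L[ℝ] ℝ) : ContDiff ℝ n (fun x => ∑ i, F i (ℓ i x)) :=
  ContDiff.sum fun i _ => (hF i).comp (ℓ i).contDiff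

end SumCompCLM

noncomputable def dotProductCLM {σ : Type*} [Fintype σ] (u : σ → ℝ) : (σ → ℝ) →L[ℝ] ℝ :=
  LinearMap.toContinuousLinearMap (dotProductBilin ℝ ℝ u)

@[simp]
theorem dotProductCLM_apply {σ : Type*} [Fintype σ] (u v : σ → ℝ) : dotProductCLM u v = u ⬝ᵥ v :=
  rfl

section Sums

variable {R σ : Type*} [CommSemiring R] [Fintype σ]

theorem LinearMap.apply_eq_sum_apply_single_mul [DecidableEq σ] (ψ : (σ → R) →ₗ[R] R)
    (u : σ → R) : ψ u = ∑ j, ψ (Pi.single j 1) * u j := by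
  conv_lhs => rw [← Finset.univ_sum_single u]
  refine (map_sum ψ _ _).trans (Finset.sum_congr rfl fun j _ => ?_)
  rw [mul_comm, ← smul_eq_mul, ← map_smul, ← Pi.single_smul', smul_eq_mul, mul_one]

theorem LinearMap.sum_apply_single_mul_add_sum_apply_single_mul [DecidableEq σ]
    (φ : (σ → R) × (σ → R) →ₗ[R] R) (v w : σ → R) :
    ∑ j, φ (Pi.single j 1, 0) * v j + ∑ j, φ (0, Pi.single j 1) * w j = φ (v, w) := by
  rw [← Prod.fst_add_snd (v, w), map_add]
  exact congr_arg₂ (· + ·)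
    ((φ.comp (LinearMap.inl R _ _)).apply_eq_sum_apply_single_mul v).symm
    ((φ.comp (LinearMap.inr R _ _)).apply_eq_sum_apply_single_mul w).symm

theorem sum_sum_mul_mul_eq_sum_mul_dotProduct {ι : Type*} [Fintype ι] (η : ι → σ → R)
    (y : ι → R) (v : σ → R) : ∑ j, (∑ α, η α j * y α) * v j = ∑ α, y α * (η α ⬝ᵥ v) := by
  simp only [sum_mul, dotProduct, mul_sum]
  rw [sum_comm]
  exact Finset.sum_congr rfl fun _ _ => Finset.sum_congr rfl fun _ _ => by ring

theorem sum_sum_sum_mul_mul_eq_sum_dotProduct_mul_dotProduct {ι : Type*} [Fintype ι]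
    (n : ι → σ → R) (x : ι → R) (v w : σ → R) :
    ∑ j, (∑ i, (∑ a, n a j * n a i * x a) * w i) * v j = ∑ a, (n a ⬝ᵥ v * x a) * (n a ⬝ᵥ w) := by
  simp only [sum_mul, dotProduct, mul_sum]
  rw [sum_comm, Finset.sum_congr rfl fun _ _ => Finset.sum_comm, sum_comm]
  exact Finset.sum_congr rfl fun _ _ => Finset.sum_congr rfl fun _ _ =>
    Finset.sum_congr rfl fun _ _ => by ring

end Sums

theorem exists_energy_function_dissipative_general (m k p r : ℕ)
    (L : Fin k → ℝ → ℝ) (C : Fin p → ℝ → ℝ) (R : Fin r → ℝ → ℝ)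
    (hL : ∀ a, ContDiff ℝ (⊤ : ℕ∞) (L a)) (hC : ∀ α, ContDiff ℝ (⊤ : ℕ∞) (C α))
    (n : Fin k → Fin m → ℝ) (η : Fin p → Fin m → ℝ) (N : Fin r → Fin m → ℝ)
    (c : Fin p → ℝ) :
    ∃ E₀ : (Fin m → ℝ) × (Fin m → ℝ) → ℝ, ContDiff ℝ (⊤ : ℕ∞) E₀ ∧
      (∀ q v w : Fin m → ℝ,
        ∑ j, ((∑ i, (∑ a, n a j * n a i * L a (∑ s, n a s * v s)) * w i)
              + ∑ α, η α j * C α ((∑ s, η α s * q s) + c α)) * v j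
        = ∑ j, (fderiv ℝ E₀ (q, v) (Pi.single j 1, 0)) * v j
          + ∑ j, (fderiv ℝ E₀ (q, v) (0, Pi.single j 1)) * w j) ∧
      (∀ q v w : Fin m → ℝ,
        ∑ j, ((∑ i, (∑ a, n a j * n a i * L a (∑ s, n a s * v s)) * w i)
              + ∑ Γ, N Γ j * R Γ (∑ s, N Γ s * v s)
              + ∑ α, η α j * C α ((∑ s, η α s * q s) + c α)) * v j
        = ∑ j, (fderiv ℝ E₀ (q, v) (Pi.single j 1, 0)) * v j
          + ∑ j, (fderiv ℝ E₀ (q, v) (0, Pi.single j 1)) * w j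
          + ∑ Γ, R Γ (∑ s, N Γ s * v s) * (∑ s, N Γ s * v s)) := by
  choose F hF_smooth hF using fun a => exists_contDiff_hasDerivAt (contDiff_id.mul (hL a))
  choose G hG_smooth hG using fun α =>
    exists_contDiff_hasDerivAt ((hC α).comp (contDiff_id.add (contDiff_const (c := c α))))
  let ℓ a := (dotProductCLM (n a)).comp (ContinuousLinearMap.snd ℝ (Fin m → ℝ) (Fin m → ℝ))
  let μ α := (dotProductCLM (η α)).comp (ContinuousLinearMap.fst ℝ (Fin m → ℝ) (Fin m → ℝ))
  let E₀ x := ∑ a, F a (ℓ a x) + ∑ α, G α (μ α x)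
  have hE₀ (q v w : Fin m → ℝ) :
      ∑ j, (fderiv ℝ E₀ (q, v) (Pi.single j 1, 0)) * v j
        + ∑ j, (fderiv ℝ E₀ (q, v) (0, Pi.single j 1)) * w j
      = ∑ a, (n a ⬝ᵥ v * L a (n a ⬝ᵥ v)) * (n a ⬝ᵥ w)
        + ∑ α, C α (η α ⬝ᵥ q + c α) * (η α ⬝ᵥ v) := by
    refine ((fderiv ℝ E₀ (q, v)).toLinearMap.sum_apply_single_mul_add_sum_apply_single_mul
      v w).trans ?_
    rw [ContinuousLinearMap.coe_coe,
      ((hasFDerivAt_sum_comp_clm hF ℓ _).fun_add (hasFDerivAt_sum_comp_clm hG μ _)).fderiv]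
    simp [ℓ, μ]
  have hLC (q v w : Fin m → ℝ) :
      ∑ j, ((∑ i, (∑ a, n a j * n a i * L a (∑ s, n a s * v s)) * w i)
              + ∑ α, η α j * C α ((∑ s, η α s * q s) + c α)) * v j
      = ∑ a, (n a ⬝ᵥ v * L a (n a ⬝ᵥ v)) * (n a ⬝ᵥ w)
        + ∑ α, C α (η α ⬝ᵥ q + c α) * (η α ⬝ᵥ v) := by
    rw [← sum_sum_sum_mul_mul_eq_sum_dotProduct_mul_dotProduct,
      ← sum_sum_mul_mul_eq_sum_mul_dotProduct, ← sum_add_distrib]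
    simp only [add_mul]
    rfl
  refine ⟨E₀, (contDiff_sum_comp_clm hF_smooth ℓ).add (contDiff_sum_comp_clm hG_smooth μ),
    fun q v w => (hLC q v w).trans (hE₀ q v w).symm, fun q v w => ?_⟩
  have hRes : ∑ j, (∑ Γ, N Γ j * R Γ (∑ s, N Γ s * v s)) * v j
      = ∑ Γ, R Γ (∑ s, N Γ s * v s) * (∑ s, N Γ s * v s) :=
    sum_sum_mul_mul_eq_sum_mul_dotProduct N _ v
  rw [hE₀, ← hLC, ← hRes, ← sum_add_distrib]
  exact Finset.sum_congr rfl fun _ _ => by ring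

/-- Existence of a smooth energy function E₀ for the inductor/capacitor part of the
Birkhoffian of a nonlinear RLC network, and the resulting dissipativity identity for the
full Birkhoffian components Q_j. -/
theorem exists_energy_function_dissipative (m k p r : ℕ)
    (L : Fin k → ℝ → ℝ) (C : Fin p → ℝ → ℝ) (R : Fin r → ℝ → ℝ)
    (hL : ∀ a, ContDiff ℝ (⊤ : ℕ∞) (L a)) (hC : ∀ α, ContDiff ℝ (⊤ : ℕ∞) (C α))
    (hR : ∀ Γ, ContDiff ℝ (⊤ : ℕ∞) (R Γ))
    (n : Fin k → Fin m → ℝ) (η : Fin p → Fin m → ℝ) (N : Fin r → Fin m → ℝ)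
    (c : Fin p → ℝ) :
    ∃ E₀ : (Fin m → ℝ) × (Fin m → ℝ) → ℝ, ContDiff ℝ (⊤ : ℕ∞) E₀ ∧
      (∀ q v w : Fin m → ℝ,
        ∑ j, ((∑ i, (∑ a, n a j * n a i * L a (∑ s, n a s * v s)) * w i)
              + ∑ α, η α j * C α ((∑ s, η α s * q s) + c α)) * v j
        = ∑ j, (fderiv ℝ E₀ (q, v) (Pi.single j 1, 0)) * v j
          + ∑ j, (fderiv ℝ E₀ (q, v) (0, Pi.single j 1)) * w j) ∧
      (∀ q v w : Fin m → ℝ,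
        ∑ j, ((∑ i, (∑ a, n a j * n a i * L a (∑ s, n a s * v s)) * w i)
              + ∑ Γ, N Γ j * R Γ (∑ s, N Γ s * v s)
              + ∑ α, η α j * C α ((∑ s, η α s * q s) + c α)) * v j
        = ∑ j, (fderiv ℝ E₀ (q, v) (Pi.single j 1, 0)) * v j
          + ∑ j, (fderiv ℝ E₀ (q, v) (0, Pi.single j 1)) * w j
          + ∑ Γ, R Γ (∑ s, N Γ s * v s) * (∑ s, N Γ s * v s)) :=
  exists_energy_function_dissipative_general m k p r L C R hL hC n η N c
end

section
/- Let b, m be natural numbers, let A be a real b×m matrix, let ℭ be an invertible real m×m matrix, and define the real b×m matrix N by Nᵀ = ℭ·Aᵀ. Let S ⊆ {1, …, b} be a set of row indices, and suppose there exists a column index l ∈ {1, …, m} such that A^a_l = 0 for every a ∈ S. Then for every choice of real numbers λ_a (a ∈ S), the m×m matrix with entries M_{ji} = Σ_{a ∈ S} λ_a N^a_j N^a_i has determinant zero. -/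
open Matrix

/-- If Nᵀ = ℭ·Aᵀ with ℭ invertible and all rows a ∈ S of A vanish in some column l, then
for any weights λ_a the matrix M_{ji} = Σ_{a∈S} λ_a N^a_j N^a_i has determinant zero
(the Birkhoffian is never regular). -/
theorem acceleration_matrix_det_zero (b m : ℕ)
    (A : Matrix (Fin b) (Fin m) ℝ)
    (C : Matrix (Fin m) (Fin m) ℝ) (hC : IsUnit C)
    (N : Matrix (Fin b) (Fin m) ℝ) (hN : Nᵀ = C * Aᵀ)
    (S : Finset (Fin b)) (l : Fin m) (hA : ∀ a ∈ S, A a l = 0)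
    (lam : Fin b → ℝ) :
    (Matrix.of fun j i : Fin m => ∑ a ∈ S, lam a * N a j * N a i).det = 0 := by
  have hdet : IsUnit C.det := (Matrix.isUnit_iff_isUnit_det C).mp hC
  obtain ⟨v, hCv⟩ : ∃ v : Fin m → ℝ, Cᵀ *ᵥ v = Pi.single l 1 := by
    refine ⟨(C⁻¹)ᵀ *ᵥ Pi.single l 1, ?_⟩
    rw [mulVec_mulVec, ← Matrix.transpose_mul, Matrix.nonsing_inv_mul C hdet,
      Matrix.transpose_one, Matrix.one_mulVec]
  have hvne : v ≠ 0 := by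
    intro h
    have : (Pi.single l 1 : Fin m → ℝ) = 0 := by
      rw [← hCv, h, Matrix.mulVec_zero]
    have := congrFun this l
    simp at this
  rw [← Matrix.exists_mulVec_eq_zero_iff]
  refine ⟨v, hvne, ?_⟩
  funext j
  have hNv : ∀ a ∈ S, ∑ i, N a i * v i = 0 := by
    intro a ha
    have hNai : ∀ i, N a i = ∑ k, C i k * A a k := by
      intro i
      have := congrFun (congrFun hN i) a
      simpa [Matrix.transpose_apply, Matrix.mul_apply] using this
    calc ∑ i, N a i * v i = ∑ i, (∑ k, C i k * A a k) * v i := by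
          simp_rw [hNai]
      _ = ∑ k, (∑ i, C i k * v i) * A a k := by
          simp_rw [Finset.sum_mul]
          rw [Finset.sum_comm]
          exact Finset.sum_congr rfl fun k _ => Finset.sum_congr rfl fun i _ => by ring
      _ = ∑ k, (Pi.single l 1 : Fin m → ℝ) k * A a k := by
          refine Finset.sum_congr rfl fun k _ => ?_
          have h2 : (Cᵀ *ᵥ v) k = ∑ i, C i k * v i := by
            simp [Matrix.mulVec, dotProduct, Matrix.transpose_apply]
          rw [← hCv, h2]
      _ = A a l := by simp [Pi.single_apply]
      _ = 0 := hA a ha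
  simp only [Matrix.mulVec, dotProduct, Matrix.of_apply, Pi.zero_apply]
  calc ∑ i, (∑ a ∈ S, lam a * N a j * N a i) * v i
      = ∑ a ∈ S, lam a * N a j * (∑ i, N a i * v i) := by
        simp_rw [Finset.sum_mul]
        rw [Finset.sum_comm]
        refine Finset.sum_congr rfl fun a _ => ?_
        rw [Finset.mul_sum]
        exact Finset.sum_congr rfl fun i _ => by ring
    _ = 0 := by
        apply Finset.sum_eq_zero
        intro a ha
        rw [hNv a ha, mul_zero]
end

section
/- Let p be a natural number and α range over {1, …, P}. Let C_α : ℝ → ℝ be differentiable functions, let μ_α ∈ ℝ and n^α ∈ ℝᵖ and c_α ∈ ℝ be constants, let U ⊆ ℝᵖ be open, and let f : U → ℝ be a differentiable function satisfying the constraint Σ_{α=1}^{P} μ_α C_α(μ_α f(q) + ⟨n^α, q⟩ + c_α) = 0 for all q ∈ U. Define G_j : U → ℝ by G_j(q) = Σ_{α=1}^{P} n^α_j C_α(μ_α f(q) + ⟨n^α, q⟩ + c_α). Then for all j, l ∈ {1, …, p} and all q ∈ U: (∂G_j/∂q^l)(q) = (∂G_l/∂q^j)(q). -/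
/-!
Write `a_α = μ_α f + ⟨n^α, ·⟩ + c_α` and `d_α = C_α'(a_α(q))`. Then
`∂_l G_j = Σ_α n^α_j d_α (μ_α ∂_l f + n^α_l)`, whose only non-symmetric part is
`∂_l f · Σ_α μ_α d_α n^α_j`. Differentiating the constraint gives
`Σ_α μ_α d_α n^α_j = -∂_j f · Σ_α μ_α² d_α`, so that part equals `-∂_j f ∂_l f Σ_α μ_α² d_α`,
which is symmetric as well. No invertibility of `Σ_α μ_α² d_α` is needed.
-/

open Filter Topology

theorem sum_mul_mul_add_comm_of_sum_eq_zero {P : ℕ} (μ d a b : Fin P → ℝ) (s t : ℝ)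
    (ha : ∑ α, μ α * (d α * (μ α * s + a α)) = 0)
    (hb : ∑ α, μ α * (d α * (μ α * t + b α)) = 0) :
    ∑ α, a α * (d α * (μ α * t + b α)) = ∑ α, b α * (d α * (μ α * s + a α)) := by
  have key : ∑ α, a α * (d α * (μ α * t + b α)) - ∑ α, b α * (d α * (μ α * s + a α))
      = t * ∑ α, μ α * (d α * (μ α * s + a α)) - s * ∑ α, μ α * (d α * (μ α * t + b α)) := by
    simp only [Finset.mul_sum, ← Finset.sum_sub_distrib]
    exact Finset.sum_congr rfl fun α _ => by ring
  linear_combination key + t * ha - s * hb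

theorem fderiv_sum_apply_mul_comp_comm {E : Type*} [NormedAddCommGroup E] [NormedSpace ℝ E]
    {P : ℕ} {C : Fin P → ℝ → ℝ} (hC : ∀ α, Differentiable ℝ (C α))
    (μ c : Fin P → ℝ) (N : Fin P → E →L[ℝ] ℝ) {f : E → ℝ} {q : E} (hf : DifferentiableAt ℝ f q)
    (hcon : (fun x => ∑ α, μ α * C α (μ α * f x + N α x + c α)) =ᶠ[𝓝 q] fun _ => 0) (u v : E) :
    fderiv ℝ (fun x => ∑ α, N α u * C α (μ α * f x + N α x + c α)) q v
      = fderiv ℝ (fun x => ∑ α, N α v * C α (μ α * f x + N α x + c α)) q u := by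
  set D := fderiv ℝ f q
  set d : Fin P → ℝ := fun α => deriv (C α) (μ α * f q + N α q + c α)
  have hG : ∀ w : Fin P → ℝ, HasFDerivAt (fun x => ∑ α, w α * C α (μ α * f x + N α x + c α))
      (∑ α, w α • d α • (μ α • D + N α)) q := fun w =>
    HasFDerivAt.fun_sum fun α _ => ((hC α _).hasDerivAt.comp_hasFDerivAt q
      (((hf.hasFDerivAt.const_mul (μ α)).add (N α).hasFDerivAt).add_const (c α))).const_mul (w α)
  have hG_apply : ∀ (w : Fin P → ℝ) (y : E),
      fderiv ℝ (fun x => ∑ α, w α * C α (μ α * f x + N α x + c α)) q y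
        = ∑ α, w α * (d α * (μ α * D y + N α y)) := fun w y => by
    simp only [(hG w).fderiv, sum_apply, smul_apply, add_apply, smul_eq_mul]
  have hlin : ∀ y, ∑ α, μ α * (d α * (μ α * D y + N α y)) = 0 := fun y => by
    rw [← hG_apply, hcon.fderiv_eq, fderiv_fun_const, Pi.zero_apply, zero_apply]
  rw [hG_apply, hG_apply]
  exact sum_mul_mul_add_comm_of_sum_eq_zero μ d _ _ (D u) (D v) (hlin u) (hlin v)

/-- Symmetry of the partial derivatives of the reduced capacitor terms
G_j(q) = Σ_α n^α_j C_α(μ_α f(q) + ⟨n^α,q⟩ + c_α), where f is the implicitly defined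
function satisfying the constraint Σ_α μ_α C_α(μ_α f(q) + ⟨n^α,q⟩ + c_α) = 0 on U. -/
theorem reduced_capacitor_form_closed (p P : ℕ)
    (C : Fin P → ℝ → ℝ) (hC : ∀ α, Differentiable ℝ (C α))
    (μ : Fin P → ℝ) (n : Fin P → Fin p → ℝ) (c : Fin P → ℝ)
    (U : Set (Fin p → ℝ)) (hU : IsOpen U)
    (f : (Fin p → ℝ) → ℝ) (hf : ∀ q ∈ U, DifferentiableAt ℝ f q)
    (hcon : ∀ q ∈ U, ∑ α, μ α * C α (μ α * f q + (∑ i, n α i * q i) + c α) = 0) :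
    ∀ (j l : Fin p), ∀ q ∈ U,
      fderiv ℝ (fun q : Fin p → ℝ =>
          ∑ α, n α j * C α (μ α * f q + (∑ i, n α i * q i) + c α)) q (Pi.single l 1)
      = fderiv ℝ (fun q : Fin p → ℝ =>
          ∑ α, n α l * C α (μ α * f q + (∑ i, n α i * q i) + c α)) q (Pi.single j 1) := by
  intro j l q hq
  let N : Fin P → (Fin p → ℝ) →L[ℝ] ℝ := fun α =>
    LinearMap.toContinuousLinearMap (dotProductBilin ℝ ℝ (n α))
  have hN : ∀ α x, N α x = ∑ i, n α i * x i := fun _ _ => rfl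
  have hN_single : ∀ α k, N α (Pi.single k 1) = n α k := fun α k =>
    dotProduct_single_one (n α) k
  have h := fderiv_sum_apply_mul_comp_comm hC μ c N (hf q hq)
    (eventually_of_mem (hU.mem_nhds hq) hcon) (Pi.single j 1) (Pi.single l 1)
  simpa only [hN_single, hN] using h
end

section
/- Let p be a natural number, let R_Γ : ℝ → ℝ (Γ = 1, …, s) satisfy the passivity condition R_Γ(x)·x > 0 for all x ≠ 0, let a_Γ ∈ ℝ, let n¹, …, nˢ ∈ ℝᵖ, let U ⊆ ℝᵖ, and let h : U → ℝ satisfy Σ_{Γ=1}^{s} a_Γ R_Γ(a_Γ h(v) + ⟨n^Γ, v⟩) = 0 for all v ∈ U. Then, writing w_Γ(v) = a_Γ h(v) + ⟨n^Γ, v⟩, one has for every v ∈ U: Σ_{j=1}^{p} [ Σ_{Γ=1}^{s} n^Γ_j R_Γ(w_Γ(v)) ] v^j = Σ_{Γ=1}^{s} R_Γ(w_Γ(v))·w_Γ(v), and this quantity is nonnegative; it is strictly positive whenever some w_Γ(v) ≠ 0. -/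
/-- Elimination of a pure loop of nonlinear passive resistors: if h satisfies the velocity
constraint Σ_Γ a_Γ R_Γ(a_Γ h(v) + ⟨n^Γ,v⟩) = 0 on U, then with w_Γ(v) = a_Γ h(v) + ⟨n^Γ,v⟩
one has Σ_j (Σ_Γ n^Γ_j R_Γ(w_Γ(v))) v^j = Σ_Γ R_Γ(w_Γ(v))·w_Γ(v) ≥ 0, strictly positive when
some w_Γ(v) ≠ 0. -/
theorem nonlinear_resistor_loop_dissipative (p s : ℕ)
    (R : Fin s → ℝ → ℝ) (hR : ∀ Γ, ∀ x : ℝ, x ≠ 0 → R Γ x * x > 0)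
    (a : Fin s → ℝ) (n : Fin s → Fin p → ℝ)
    (U : Set (Fin p → ℝ)) (h : (Fin p → ℝ) → ℝ)
    (hcon : ∀ v ∈ U, ∑ Γ, a Γ * R Γ (a Γ * h v + ∑ i, n Γ i * v i) = 0) :
    ∀ v ∈ U,
      (∑ j, (∑ Γ, n Γ j * R Γ (a Γ * h v + ∑ i, n Γ i * v i)) * v j
        = ∑ Γ, R Γ (a Γ * h v + ∑ i, n Γ i * v i) * (a Γ * h v + ∑ i, n Γ i * v i)) ∧
      0 ≤ ∑ Γ, R Γ (a Γ * h v + ∑ i, n Γ i * v i) * (a Γ * h v + ∑ i, n Γ i * v i) ∧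
      ((∃ Γ, a Γ * h v + (∑ i, n Γ i * v i) ≠ 0) →
        0 < ∑ Γ, R Γ (a Γ * h v + ∑ i, n Γ i * v i) * (a Γ * h v + ∑ i, n Γ i * v i)) := by
  intro v hv
  set w : Fin s → ℝ := fun Γ => a Γ * h v + ∑ i, n Γ i * v i with hw
  have hterm : ∀ Γ, 0 ≤ R Γ (w Γ) * w Γ := by
    intro Γ
    by_cases hz : w Γ = 0
    · simp [hz]
    · exact le_of_lt (hR Γ _ hz)
  refine ⟨?_, Finset.sum_nonneg fun Γ _ => hterm Γ, ?_⟩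
  · have key : ∑ Γ, R Γ (w Γ) * (∑ i, n Γ i * v i)
        = ∑ Γ, R Γ (w Γ) * w Γ - h v * ∑ Γ, a Γ * R Γ (w Γ) := by
      rw [Finset.mul_sum, ← Finset.sum_sub_distrib]
      congr 1; ext Γ; simp only [hw]; ring
    rw [hcon v hv] at key
    calc ∑ j, (∑ Γ, n Γ j * R Γ (w Γ)) * v j
        = ∑ Γ, R Γ (w Γ) * (∑ i, n Γ i * v i) := by
          simp_rw [Finset.sum_mul, Finset.mul_sum]
          rw [Finset.sum_comm]
          exact Finset.sum_congr rfl fun Γ _ =>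
            Finset.sum_congr rfl fun j _ => by ring
      _ = ∑ Γ, R Γ (w Γ) * w Γ := by simpa using key
  · rintro ⟨Γ, hΓ⟩
    have : 0 < R Γ (w Γ) * w Γ := hR Γ _ hΓ
    exact Finset.sum_pos' (fun Γ' _ => hterm Γ') ⟨Γ, Finset.mem_univ Γ, this⟩
end

section
/- Let m, k, p, r be natural numbers, let L_a : ℝ → ℝ (a = 1, …, k), C_α : ℝ → ℝ (α = 1, …, p) be continuous functions, let R_Γ : ℝ → ℝ (Γ = 1, …, r) satisfy the passivity condition R_Γ(x)·x > 0 for all x ≠ 0, let n^a, η^α, N^Γ ∈ ℝᵐ and c_α ∈ ℝ, and define Q_j(q,v,w) = Σ_{i=1}^{m} Σ_{a=1}^{k} n^a_j n^a_i L_a(⟨n^a, v⟩) w^i + Σ_{Γ=1}^{r} N^Γ_j R_Γ(⟨N^Γ, v⟩) + Σ_{α=1}^{p} η^α_j C_α(⟨η^α, q⟩ + c_α). Suppose there exists v* ∈ ℝᵐ such that ⟨N^Γ, v*⟩ ≠ 0 for some Γ. Then there exists no twice continuously differentiable function E : ℝᵐ × ℝᵐ → ℝ satisfying Σ_{j=1}^{m}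 Q_j(q,v,w) v^j = Σ_{j=1}^{m} (∂E/∂q^j)(q,v) v^j + Σ_{j=1}^{m} (∂E/∂v^j)(q,v) w^j for all q, v, w ∈ ℝᵐ. -/
/-!
By the identity, `∂E/∂v` equals the inductor term, which does not depend on `q`. Hence
`E (q, v) - E (q', v)` does not depend on `v`, so `∂E/∂q` does not depend on `v`. Setting
`q = w = 0`, the dissipated power `∑_Γ R_Γ(⟨N^Γ, v⟩) ⟨N^Γ, v⟩` becomes a linear function of `v`,
which is impossible: passivity makes it positive at both `v*` and `-v*`.
-/

open ContinuousLinearMap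

section PartialDerivatives

variable {𝕜 E F : Type*} [RCLike 𝕜] [NormedAddCommGroup E] [NormedSpace 𝕜 E]
  [NormedAddCommGroup F] [NormedSpace 𝕜 F] {f : E × F → 𝕜}

theorem sub_eq_sub_of_fderiv_comp_inr_eq (hf : Differentiable 𝕜 f)
    (h : ∀ x x' y, (fderiv 𝕜 f (x, y)).comp (inr 𝕜 E F) = (fderiv 𝕜 f (x', y)).comp (inr 𝕜 E F))
    (x x' : E) (y y' : F) : f (x, y) - f (x', y) = f (x, y') - f (x', y') := by
  have hpartial : ∀ x y, HasFDerivAt (fun y => f (x, y)) ((fderiv 𝕜 f (x, y)).comp (inr 𝕜 E F)) y :=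
    fun x y => (hf (x, y)).hasFDerivAt.comp y (hasFDerivAt_prodMk_right x y)
  refine is_const_of_fderiv_eq_zero (f := fun y => f (x, y) - f (x', y))
    (fun y => ((hpartial x y).sub (hpartial x' y)).differentiableAt) (fun y => ?_) y y'
  have hzero := ((hpartial x y).sub (hpartial x' y)).fderiv
  rw [h x x' y, sub_self] at hzero
  exact hzero

theorem fderiv_comp_inl_eq_of_fderiv_comp_inr_eq (hf : Differentiable 𝕜 f)
    (h : ∀ x x' y, (fderiv 𝕜 f (x, y)).comp (inr 𝕜 E F) = (fderiv 𝕜 f (x', y)).comp (inr 𝕜 E F))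
    (x : E) (y y' : F) :
    (fderiv 𝕜 f (x, y)).comp (inl 𝕜 E F) = (fderiv 𝕜 f (x, y')).comp (inl 𝕜 E F) := by
  have hpartial : ∀ y, HasFDerivAt (fun x => f (x, y)) ((fderiv 𝕜 f (x, y)).comp (inl 𝕜 E F)) x :=
    fun y => (hf (x, y)).hasFDerivAt.comp x (hasFDerivAt_prodMk_left x y)
  have hshift : (fun z => f (z, y)) = fun z => f (z, y') + (f (x, y) - f (x, y')) := by
    funext z
    linear_combination sub_eq_sub_of_fderiv_comp_inr_eq hf h z x y y'
  refine (hpartial y).unique ?_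
  rw [hshift]
  exact (hpartial y').add_const _

end PartialDerivatives

theorem ContinuousLinearMap.pi_ext_one {ι 𝕜 M : Type*} [Finite ι] [DecidableEq ι]
    [Semiring 𝕜] [TopologicalSpace 𝕜] [AddCommMonoid M] [TopologicalSpace M] [Module 𝕜 M]
    {f g : (ι → 𝕜) →L[𝕜] M} (h : ∀ i, f (Pi.single i 1) = g (Pi.single i 1)) : f = g :=
  coe_injective (LinearMap.pi_ext' fun i => LinearMap.ext_ring (h i))

section Dissipation

variable {m r : ℕ} (R : Fin r → ℝ → ℝ) (N : Fin r → Fin m → ℝ)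

def dissipatedPower (v : Fin m → ℝ) : ℝ :=
  ∑ Γ, R Γ (∑ s, N Γ s * v s) * ∑ s, N Γ s * v s

theorem sum_resistor_mul_eq_dissipatedPower (v : Fin m → ℝ) :
    ∑ j, (∑ Γ, N Γ j * R Γ (∑ s, N Γ s * v s)) * v j = dissipatedPower R N v := by
  simp only [dissipatedPower, Finset.sum_mul, Finset.mul_sum]
  rw [Finset.sum_comm]
  exact Finset.sum_congr rfl fun Γ _ => Finset.sum_congr rfl fun j _ => by ring

variable {R N}

theorem dissipatedPower_pos (hR : ∀ Γ, ∀ x : ℝ, x ≠ 0 → R Γ x * x > 0) {v : Fin m → ℝ}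
    {Γ : Fin r} (hΓ : ∑ s, N Γ s * v s ≠ 0) : 0 < dissipatedPower R N v := by
  refine Finset.sum_pos' (fun Γ' _ => ?_) ⟨Γ, Finset.mem_univ _, hR Γ _ hΓ⟩
  rcases eq_or_ne (∑ s, N Γ' s * v s) 0 with h | h
  · rw [h, mul_zero]
  · exact (hR Γ' _ h).le

theorem dissipatedPower_not_linear (hR : ∀ Γ, ∀ x : ℝ, x ≠ 0 → R Γ x * x > 0)
    (hv : ∃ v : Fin m → ℝ, ∃ Γ, ∑ i, N Γ i * v i ≠ 0) (a : Fin m → ℝ) :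
    ¬ ∀ v, dissipatedPower R N v = ∑ j, a j * v j := by
  obtain ⟨v, Γ, hΓ⟩ := hv
  intro hlin
  have hneg : ∑ i, N Γ i * (-v) i ≠ 0 := by
    simpa [Finset.sum_neg_distrib] using hΓ
  have h₁ := dissipatedPower_pos hR hΓ
  have h₂ := dissipatedPower_pos hR hneg
  rw [hlin] at h₁ h₂
  simp only [Pi.neg_apply, mul_neg, Finset.sum_neg_distrib] at h₂
  linarith

end Dissipation

theorem birkhoffian_not_conservative_general (m k p r : ℕ)
    (L : Fin k → ℝ → ℝ)
    (C : Fin p → ℝ → ℝ)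
    (R : Fin r → ℝ → ℝ) (hR : ∀ Γ, ∀ x : ℝ, x ≠ 0 → R Γ x * x > 0)
    (n : Fin k → Fin m → ℝ) (η : Fin p → Fin m → ℝ) (N : Fin r → Fin m → ℝ)
    (c : Fin p → ℝ)
    (hv : ∃ v : Fin m → ℝ, ∃ Γ, (∑ i, N Γ i * v i) ≠ 0) :
    ¬ ∃ E : (Fin m → ℝ) × (Fin m → ℝ) → ℝ, ContDiff ℝ 2 E ∧
      ∀ q v w : Fin m → ℝ,
        ∑ j, ((∑ i, (∑ a, n a j * n a i * L a (∑ s, n a s * v s)) * w i)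
              + ∑ Γ, N Γ j * R Γ (∑ s, N Γ s * v s)
              + ∑ α, η α j * C α ((∑ s, η α s * q s) + c α)) * v j
        = ∑ j, (fderiv ℝ E (q, v) (Pi.single j 1, 0)) * v j
          + ∑ j, (fderiv ℝ E (q, v) (0, Pi.single j 1)) * w j := by
  rintro ⟨E, hE, hEq⟩
  have hvel : ∀ q v i, fderiv ℝ E (q, v) (0, Pi.single i 1)
      = ∑ j, (∑ a, n a j * n a i * L a (∑ s, n a s * v s)) * v j := by
    intro q v i
    have h₁ := hEq q v (Pi.single i 1)
    have h₀ := hEq q v 0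
    simp only [Pi.single_apply, Pi.zero_apply, mul_ite, mul_one, mul_zero,
      Finset.sum_ite_eq', Finset.mem_univ, if_true, Finset.sum_const_zero, zero_add,
      add_zero, add_mul, Finset.sum_add_distrib] at h₁ h₀
    linarith
  have hvel_indep : ∀ q q' v,
      (fderiv ℝ E (q, v)).comp (inr ℝ _ _) = (fderiv ℝ E (q', v)).comp (inr ℝ _ _) :=
    fun q q' v => pi_ext_one fun i => by simp only [comp_apply, inr_apply, hvel]
  have hpos : ∀ q v j,
      fderiv ℝ E (q, v) (Pi.single j 1, 0) = fderiv ℝ E (q, 0) (Pi.single j 1, 0) :=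
    fun q v j => DFunLike.congr_fun (fderiv_comp_inl_eq_of_fderiv_comp_inr_eq
      (hE.differentiable two_ne_zero) hvel_indep q v 0) (Pi.single j 1)
  refine dissipatedPower_not_linear hR hv
    (fun j => fderiv ℝ E (0, 0) (Pi.single j 1, 0) - ∑ α, η α j * C α (c α)) fun v => ?_
  have h := hEq 0 v 0
  simp only [Pi.zero_apply, mul_zero, Finset.sum_const_zero, zero_add, add_zero, add_mul,
    Finset.sum_add_distrib, sum_resistor_mul_eq_dissipatedPower, hpos] at h
  simp only [sub_mul, Finset.sum_sub_distrib]
  linarith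

/-- The Birkhoffian of an RLC network with passive current-controlled resistors is not
conservative: there is no C² energy function E with
Σ_j Q_j(q,v,w) v^j = Σ_j ∂E/∂q^j(q,v) v^j + Σ_j ∂E/∂v^j(q,v) w^j for all q, v, w,
provided some resistor actually sees a nonzero current ⟨N^Γ,v*⟩ for some v*. -/
theorem birkhoffian_not_conservative (m k p r : ℕ)
    (L : Fin k → ℝ → ℝ) (hL : ∀ a, Continuous (L a))
    (C : Fin p → ℝ → ℝ) (hC : ∀ α, Continuous (C α))
    (R : Fin r → ℝ → ℝ) (hR : ∀ Γ, ∀ x : ℝ, x ≠ 0 → R Γ x * x > 0)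
    (n : Fin k → Fin m → ℝ) (η : Fin p → Fin m → ℝ) (N : Fin r → Fin m → ℝ)
    (c : Fin p → ℝ)
    (hv : ∃ v : Fin m → ℝ, ∃ Γ, (∑ i, N Γ i * v i) ≠ 0) :
    ¬ ∃ E : (Fin m → ℝ) × (Fin m → ℝ) → ℝ, ContDiff ℝ 2 E ∧
      ∀ q v w : Fin m → ℝ,
        ∑ j, ((∑ i, (∑ a, n a j * n a i * L a (∑ s, n a s * v s)) * w i)
              + ∑ Γ, N Γ j * R Γ (∑ s, N Γ s * v s)
              + ∑ α, η α j * C α ((∑ s, η α s * q s) + c α)) * v j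
        = ∑ j, (fderiv ℝ E (q, v) (Pi.single j 1, 0)) * v j
          + ∑ j, (fderiv ℝ E (q, v) (0, Pi.single j 1)) * w j :=
  birkhoffian_not_conservative_general m k p r L C R hR n η N c hv
end
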